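/- arXiv:2103.01160 — 3 statements merged into one kernel-verified Lean document; each statement's English description precedes it below -/
import Mathlib

section
/- The 1-Wasserstein distance between two probability measures on ℝ with finite first moments equals the L¹ distance between their cumulative distribution functions: W₁(μ₁, μ₂) = ∫_ℝ |F₁(x) − F₂(x)| dx. -/
/-!
Both sides are computed through the layer-cake identity
`|a - b| = λ {t | exactly one of a ≤ t, b ≤ t holds}`. Integrating it against a coupling `γ`
and swapping the integrals turns the transport cost into `∫ γ(A_t ∆ B_t) dt`, where
`A_t = {x ≤ t}` and `B_t = {y ≤ t}` have `γ`-measures `F₁ t` and `F₂ t`; hence the cost is at least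
`∫ |F₁ - F₂|`. The quantile coupling `u ↦ (F₁⁻¹ u, F₂⁻¹ u)` of the uniform law on `(0, 1)` makes
`A_t` and `B_t` nested up to null sets, so it attains the bound. Finite first moments are what
make `∫ |F₁ - F₂|` finite; otherwise the Bochner integral would take the junk value `0`.
-/

open MeasureTheory ProbabilityTheory Set
open scoped ENNReal symmDiff

lemma Real.volume_Ici_symmDiff_Ici (a b : ℝ) :
    volume (Ici a ∆ Ici b) = ENNReal.ofReal |a - b| := by
  wlog hab : a ≤ b generalizing a b
  · rw [symmDiff_comm, abs_sub_comm]
    exact this b a (le_of_not_ge hab)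
  rw [symmDiff_of_ge (Ici_subset_Ici.mpr hab), Ici_sdiff_Ici, Real.volume_Ico, abs_sub_comm,
    abs_of_nonneg (sub_nonneg.mpr hab)]

lemma lintegral_ofReal_abs_sub_eq_lintegral_measure_symmDiff {α : Type*} [MeasurableSpace α]
    (μ : Measure α) [SFinite μ] {f g : α → ℝ} (hf : Measurable f) (hg : Measurable g) :
    ∫⁻ x, ENNReal.ofReal |f x - g x| ∂μ = ∫⁻ t, μ ({x | f x ≤ t} ∆ {x | g x ≤ t}) := by
  let E : Set (α × ℝ) := {p | f p.1 ≤ p.2} ∆ {p | g p.1 ≤ p.2}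
  have hE : MeasurableSet E :=
    (measurableSet_le (hf.comp measurable_fst) measurable_snd).symmDiff
      (measurableSet_le (hg.comp measurable_fst) measurable_snd)
  calc ∫⁻ x, ENNReal.ofReal |f x - g x| ∂μ = ∫⁻ x, volume (Prod.mk x ⁻¹' E) ∂μ := by
        simp_rw [← Real.volume_Ici_symmDiff_Ici]; rfl
    _ = μ.prod volume E := (Measure.prod_apply hE).symm
    _ = ∫⁻ t, μ ((·, t) ⁻¹' E) := Measure.prod_apply_symm hE

section FiniteMeasure

variable {α : Type*} [MeasurableSpace α] {μ : Measure α} [IsFiniteMeasure μ]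

lemma ofReal_abs_measureReal_sub_le_measure_symmDiff (s t : Set α) :
    ENNReal.ofReal |μ.real s - μ.real t| ≤ μ (s ∆ t) := by
  wlog hts : μ.real t ≤ μ.real s generalizing s t
  · rw [symmDiff_comm, abs_sub_comm]
    exact this t s (le_of_not_ge hts)
  rw [abs_of_nonneg (sub_nonneg.mpr hts), ENNReal.ofReal_sub _ measureReal_nonneg,
    ofReal_measureReal, ofReal_measureReal]
  exact le_measure_symmDiff

lemma measure_symmDiff_eq_ofReal_abs_measureReal_sub {s t : Set α} (hs : MeasurableSet s)
    (ht : MeasurableSet t) (hnested : μ (s \ t) = 0 ∨ μ (t \ s) = 0) :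
    μ (s ∆ t) = ENNReal.ofReal |μ.real s - μ.real t| := by
  wlog hst : μ (s \ t) = 0 generalizing s t
  · rw [symmDiff_comm, abs_sub_comm]
    exact this ht hs hnested.symm (hnested.resolve_left hst)
  have hsub : μ.real s - μ.real t = -μ.real (t \ s) := by
    have hs_split := measureReal_sdiff_add_inter (μ := μ) (s := s) ht
    have ht_split := measureReal_sdiff_add_inter (μ := μ) (s := t) hs
    rw [measureReal_def, hst, ENNReal.toReal_zero, inter_comm] at hs_split
    linarith
  rw [measure_symmDiff_eq hs.nullMeasurableSet ht.nullMeasurableSet, hst, zero_add, hsub, abs_neg,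
    abs_of_nonneg measureReal_nonneg, ofReal_measureReal]

end FiniteMeasure

section Coupling

variable {μ ν : Measure ℝ} {γ : Measure (ℝ × ℝ)}

lemma cdf_eq_measureReal_fst_le [IsProbabilityMeasure μ] (hγ : γ.map Prod.fst = μ) (t : ℝ) :
    cdf μ t = γ.real {q | q.1 ≤ t} := by
  rw [cdf_eq_real, ← hγ, map_measureReal_apply measurable_fst measurableSet_Iic]; rfl

lemma cdf_eq_measureReal_snd_le [IsProbabilityMeasure ν] (hγ : γ.map Prod.snd = ν) (t : ℝ) :
    cdf ν t = γ.real {q | q.2 ≤ t} := by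
  rw [cdf_eq_real, ← hγ, map_measureReal_apply measurable_snd measurableSet_Iic]; rfl

lemma isProbabilityMeasure_of_map_fst_eq [IsProbabilityMeasure μ] (hγ : γ.map Prod.fst = μ) :
    IsProbabilityMeasure γ :=
  have : IsProbabilityMeasure (γ.map Prod.fst) := hγ ▸ inferInstance
  Measure.isProbabilityMeasure_of_map Prod.fst

lemma lintegral_ofReal_abs_cdf_sub_le [IsProbabilityMeasure μ] [IsProbabilityMeasure ν]
    (hγ₁ : γ.map Prod.fst = μ) (hγ₂ : γ.map Prod.snd = ν) :
    ∫⁻ t, ENNReal.ofReal |cdf μ t - cdf ν t| ≤ ∫⁻ q, ENNReal.ofReal |q.1 - q.2| ∂γ := by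
  have := isProbabilityMeasure_of_map_fst_eq hγ₁
  rw [lintegral_ofReal_abs_sub_eq_lintegral_measure_symmDiff γ measurable_fst measurable_snd]
  refine lintegral_mono fun t ↦ ?_
  rw [cdf_eq_measureReal_fst_le hγ₁, cdf_eq_measureReal_snd_le hγ₂]
  exact ofReal_abs_measureReal_sub_le_measure_symmDiff _ _

lemma lintegral_ofReal_abs_fst_sub_snd_lt_top (hγ₁ : γ.map Prod.fst = μ) (hγ₂ : γ.map Prod.snd = ν)
    (hμ : Integrable (fun x : ℝ ↦ x) μ) (hν : Integrable (fun x : ℝ ↦ x) ν) :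
    ∫⁻ q, ENNReal.ofReal |q.1 - q.2| ∂γ < ∞ := by
  have h₁ := (hγ₁ ▸ hμ).comp_measurable measurable_fst
  have h₂ := (hγ₂ ▸ hν).comp_measurable measurable_snd
  simpa only [HasFiniteIntegral, Pi.sub_apply, Function.comp_apply, Real.enorm_eq_ofReal_abs]
    using (h₁.sub h₂).hasFiniteIntegral

end Coupling

namespace ProbabilityTheory

/-- The generalized inverse of `cdf μ`; only its values on `(0, 1)` are meaningful. -/
noncomputable def quantile (μ : Measure ℝ) (u : ℝ) : ℝ := sInf {x | u ≤ cdf μ x}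

lemma quantile_le_iff (μ : Measure ℝ) {u : ℝ} (hu : u ∈ Ioo 0 1) (t : ℝ) :
    quantile μ u ≤ t ↔ u ≤ cdf μ t := by
  set S := {x | u ≤ cdf μ x}
  have hne : S.Nonempty :=
    ((tendsto_cdf_atTop μ).eventually_const_lt hu.2).exists.imp fun _ ↦ le_of_lt
  have hbdd : BddBelow S := by
    obtain ⟨y, hy⟩ := ((tendsto_cdf_atBot μ).eventually_lt_const hu.1).exists
    exact ⟨y, fun x hx ↦ le_of_not_gt fun hxy ↦ (hx.trans (monotone_cdf μ hxy.le)).not_gt hy⟩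
  have hmem : u ≤ cdf μ (sInf S) := by
    refine ge_of_tendsto (((cdf μ).right_continuous _).tendsto.mono_left
      (nhdsWithin_mono _ Ioi_subset_Ici_self)) ?_
    filter_upwards [self_mem_nhdsWithin] with x hx
    obtain ⟨s, hs, hsx⟩ := (csInf_lt_iff hbdd hne).mp hx
    exact hs.trans (monotone_cdf μ hsx.le)
  exact ⟨fun h ↦ hmem.trans (monotone_cdf μ h), fun h ↦ csInf_le hbdd h⟩

lemma aemeasurable_quantile (μ : Measure ℝ) :
    AEMeasurable (quantile μ) (volume.restrict (Ioo 0 1)) :=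
  aemeasurable_restrict_of_monotoneOn measurableSet_Ioo fun _ hu _ hv huv ↦
    (quantile_le_iff μ hu _).mpr (huv.trans ((quantile_le_iff μ hv _).mp le_rfl))

lemma volume_Iic_inter_Ioo_zero_one {c : ℝ} (hc : c ≤ 1) :
    volume (Iic c ∩ Ioo 0 1) = ENNReal.ofReal c := by
  rw [measure_congr ((ae_eq_refl (Iic c)).inter Ioo_ae_eq_Ioc), Iic_inter_Ioc_of_le hc,
    Real.volume_Ioc, sub_zero]

lemma map_quantile (μ : Measure ℝ) [IsProbabilityMeasure μ] :
    (volume.restrict (Ioo 0 1)).map (quantile μ) = μ := by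
  refine Measure.ext_of_Iic _ _ fun t ↦ ?_
  have hpre : quantile μ ⁻¹' Iic t ∩ Ioo 0 1 = Iic (cdf μ t) ∩ Ioo 0 1 := by
    ext u
    simp only [mem_inter_iff, mem_preimage, mem_Iic]
    exact and_congr_left (quantile_le_iff μ · t)
  rw [Measure.map_apply_of_aemeasurable (aemeasurable_quantile μ) measurableSet_Iic,
    Measure.restrict_apply' measurableSet_Ioo, hpre,
    volume_Iic_inter_Ioo_zero_one (cdf_le_one μ t), ofReal_cdf]

noncomputable def quantileCoupling (μ ν : Measure ℝ) : Measure (ℝ × ℝ) :=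
  (volume.restrict (Ioo 0 1)).map fun u ↦ (quantile μ u, quantile ν u)

lemma quantileCoupling_apply (μ ν : Measure ℝ) {s : Set (ℝ × ℝ)} (hs : MeasurableSet s) :
    quantileCoupling μ ν s = volume ((fun u ↦ (quantile μ u, quantile ν u)) ⁻¹' s ∩ Ioo 0 1) := by
  rw [quantileCoupling, Measure.map_apply_of_aemeasurable
    ((aemeasurable_quantile μ).prodMk (aemeasurable_quantile ν)) hs,
    Measure.restrict_apply' measurableSet_Ioo]

lemma map_fst_quantileCoupling (μ ν : Measure ℝ) [IsProbabilityMeasure μ] :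
    (quantileCoupling μ ν).map Prod.fst = μ := by
  rw [quantileCoupling, AEMeasurable.map_map_of_aemeasurable measurable_fst.aemeasurable
    ((aemeasurable_quantile μ).prodMk (aemeasurable_quantile ν))]
  exact map_quantile μ

lemma map_snd_quantileCoupling (μ ν : Measure ℝ) [IsProbabilityMeasure ν] :
    (quantileCoupling μ ν).map Prod.snd = ν := by
  rw [quantileCoupling, AEMeasurable.map_map_of_aemeasurable measurable_snd.aemeasurable
    ((aemeasurable_quantile μ).prodMk (aemeasurable_quantile ν))]
  exact map_quantile ν

lemma quantileCoupling_sdiff_eq_zero_or (μ ν : Measure ℝ) (t : ℝ) :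
    quantileCoupling μ ν ({q | q.1 ≤ t} \ {q | q.2 ≤ t}) = 0 ∨
      quantileCoupling μ ν ({q | q.2 ≤ t} \ {q | q.1 ≤ t}) = 0 := by
  have hA : MeasurableSet {q : ℝ × ℝ | q.1 ≤ t} := measurableSet_le measurable_fst measurable_const
  have hB : MeasurableSet {q : ℝ × ℝ | q.2 ≤ t} := measurableSet_le measurable_snd measurable_const
  rcases le_total (cdf μ t) (cdf ν t) with h | h
  · left
    rw [quantileCoupling_apply μ ν (hA.diff hB)]
    refine measure_mono_null (fun u ⟨⟨hμu, hνu⟩, hu⟩ ↦ ?_) measure_empty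
    exact hνu ((quantile_le_iff ν hu t).mpr (((quantile_le_iff μ hu t).mp hμu).trans h))
  · right
    rw [quantileCoupling_apply μ ν (hB.diff hA)]
    refine measure_mono_null (fun u ⟨⟨hνu, hμu⟩, hu⟩ ↦ ?_) measure_empty
    exact hμu ((quantile_le_iff μ hu t).mpr (((quantile_le_iff ν hu t).mp hνu).trans h))

lemma lintegral_quantileCoupling (μ ν : Measure ℝ) [IsProbabilityMeasure μ]
    [IsProbabilityMeasure ν] :
    ∫⁻ q, ENNReal.ofReal |q.1 - q.2| ∂quantileCoupling μ ν =
      ∫⁻ t, ENNReal.ofReal |cdf μ t - cdf ν t| := by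
  have := isProbabilityMeasure_of_map_fst_eq (map_fst_quantileCoupling μ ν)
  rw [lintegral_ofReal_abs_sub_eq_lintegral_measure_symmDiff _ measurable_fst measurable_snd]
  refine lintegral_congr fun t ↦ ?_
  rw [cdf_eq_measureReal_fst_le (map_fst_quantileCoupling μ ν),
    cdf_eq_measureReal_snd_le (map_snd_quantileCoupling μ ν)]
  exact measure_symmDiff_eq_ofReal_abs_measureReal_sub
    (measurableSet_le measurable_fst measurable_const)
    (measurableSet_le measurable_snd measurable_const) (quantileCoupling_sdiff_eq_zero_or μ ν t)

end ProbabilityTheory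

/-- The 1-Wasserstein distance between two probability measures on `ℝ` with finite
first moments equals the `L¹` distance between their CDFs. -/
theorem wasserstein_one_eq_cdf_L1
    (μ₁ μ₂ : Measure ℝ) [IsProbabilityMeasure μ₁] [IsProbabilityMeasure μ₂]
    (h₁ : Integrable (fun x : ℝ => x) μ₁) (h₂ : Integrable (fun x : ℝ => x) μ₂)
    (F₁ F₂ : ℝ → ℝ)
    (hF₁ : ∀ x, F₁ x = (μ₁ (Iic x)).toReal)
    (hF₂ : ∀ x, F₂ x = (μ₂ (Iic x)).toReal) :
    sInf { c : ℝ≥0∞ | ∃ γ : Measure (ℝ × ℝ),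
        γ.map Prod.fst = μ₁ ∧ γ.map Prod.snd = μ₂ ∧
        c = ∫⁻ q, ENNReal.ofReal |q.1 - q.2| ∂γ } =
      ENNReal.ofReal (∫ x, |F₁ x - F₂ x|) := by
  obtain rfl : F₁ = cdf μ₁ := funext fun x ↦ by rw [hF₁, cdf_eq_real, measureReal_def]
  obtain rfl : F₂ = cdf μ₂ := funext fun x ↦ by rw [hF₂, cdf_eq_real, measureReal_def]
  have hcost := lintegral_quantileCoupling μ₁ μ₂
  have hfinite : ∫⁻ t, ENNReal.ofReal |cdf μ₁ t - cdf μ₂ t| ≠ ∞ :=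
    hcost ▸ (lintegral_ofReal_abs_fst_sub_snd_lt_top (map_fst_quantileCoupling μ₁ μ₂)
      (map_snd_quantileCoupling μ₁ μ₂) h₁ h₂).ne
  have hmeas : AEStronglyMeasurable (fun x ↦ |cdf μ₁ x - cdf μ₂ x|) :=
    ((monotone_cdf μ₁).measurable.sub (monotone_cdf μ₂).measurable).abs.aestronglyMeasurable
  rw [integral_eq_lintegral_of_nonneg_ae (ae_of_all _ fun _ ↦ abs_nonneg _) hmeas,
    ENNReal.ofReal_toReal hfinite]
  refine le_antisymm (sInf_le ⟨quantileCoupling μ₁ μ₂, map_fst_quantileCoupling μ₁ μ₂,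
    map_snd_quantileCoupling μ₁ μ₂, hcost.symm⟩) (le_sInf ?_)
  rintro _ ⟨γ, hγ₁, hγ₂, rfl⟩
  exact lintegral_ofReal_abs_cdf_sub_le hγ₁ hγ₂
end

section
/- For one-dimensional Gaussian measures μ₁ = N(m₁, σ₁²) and μ₂ = N(m₂, σ₂²), the 2-Wasserstein distance satisfies W₂(μ₁, μ₂)² = (m₁ − m₂)² + (σ₁ − σ₂)². -/
/-!
For any coupling `(X, Y)` of `N(m₁, σ₁²)` and `N(m₂, σ₂²)`,
`E[(X - Y)²] = (m₁ - m₂)² + Var(X - Y)` and `Var(X - Y) = σ₁² - 2 Cov(X, Y) + σ₂² ≥ (σ₁ - σ₂)²`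
by Cauchy–Schwarz. The comonotone coupling `(m₁ + σ₁ Z, m₂ + σ₂ Z)` with `Z ~ N(0, 1)` attains
this bound, since then `X - Y = (m₁ - m₂) + (σ₁ - σ₂) Z`.
-/

open MeasureTheory ProbabilityTheory
open scoped ENNReal NNReal

namespace ProbabilityTheory

variable {Ω : Type*} {mΩ : MeasurableSpace Ω} {μ : Measure Ω} {X Y : Ω → ℝ}

lemma covariance_le_sqrt_variance_mul_sqrt_variance [IsFiniteMeasure μ] (hX : MemLp X 2 μ)
    (hY : MemLp Y 2 μ) : cov[X, Y; μ] ≤ √Var[X; μ] * √Var[Y; μ] := by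
  have hU : MemLp (fun ω ↦ X ω - μ[X]) (ENNReal.ofReal 2) μ := by
    rw [ENNReal.ofReal_ofNat]; exact hX.sub (memLp_const _)
  have hV : MemLp (fun ω ↦ Y ω - μ[Y]) (ENNReal.ofReal 2) μ := by
    rw [ENNReal.ofReal_ofNat]; exact hY.sub (memLp_const _)
  have hCS := integral_mul_norm_le_Lp_mul_Lq Real.HolderConjugate.two_two hU hV
  have hnorm_sq (t : ℝ) : ‖t‖ ^ (2 : ℝ) = t ^ 2 := by
    rw [Real.rpow_two, Real.norm_eq_abs, sq_abs]
  simp only [hnorm_sq, ← Real.sqrt_eq_rpow] at hCS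
  rw [variance_eq_integral hX.aemeasurable, variance_eq_integral hY.aemeasurable]
  calc cov[X, Y; μ] ≤ ‖∫ ω, (X ω - μ[X]) * (Y ω - μ[Y]) ∂μ‖ := le_abs_self _
    _ ≤ ∫ ω, ‖(X ω - μ[X]) * (Y ω - μ[Y])‖ ∂μ := norm_integral_le_integral_norm _
    _ = ∫ ω, ‖X ω - μ[X]‖ * ‖Y ω - μ[Y]‖ ∂μ := by simp only [norm_mul]
    _ ≤ _ := hCS

lemma sq_sqrt_variance_sub_sqrt_variance_le [IsFiniteMeasure μ] (hX : MemLp X 2 μ)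
    (hY : MemLp Y 2 μ) : (√Var[X; μ] - √Var[Y; μ]) ^ 2 ≤ Var[X - Y; μ] := by
  rw [variance_sub hX hY]
  nlinarith [covariance_le_sqrt_variance_mul_sqrt_variance hX hY,
    Real.sq_sqrt (variance_nonneg X μ), Real.sq_sqrt (variance_nonneg Y μ)]

lemma integral_sq_eq_sq_integral_add_variance [IsProbabilityMeasure μ] (hX : MemLp X 2 μ) :
    ∫ ω, X ω ^ 2 ∂μ = μ[X] ^ 2 + Var[X; μ] := by
  rw [variance_eq_sub hX]
  simp only [Pi.pow_apply]
  ring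

lemma sq_sub_integral_add_sq_sub_sqrt_variance_le [IsProbabilityMeasure μ] (hX : MemLp X 2 μ)
    (hY : MemLp Y 2 μ) :
    (μ[X] - μ[Y]) ^ 2 + (√Var[X; μ] - √Var[Y; μ]) ^ 2 ≤ ∫ ω, (X ω - Y ω) ^ 2 ∂μ := by
  have h := integral_sq_eq_sq_integral_add_variance (hX.sub hY)
  simp only [Pi.sub_apply] at h
  rw [integral_sub (hX.integrable one_le_two) (hY.integrable one_le_two)] at h
  rw [h]
  gcongr
  exact sq_sqrt_variance_sub_sqrt_variance_le hX hY

lemma gaussianReal_map_const_add_const_mul (m : ℝ) (σ : ℝ≥0) :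
    (gaussianReal 0 1).map (fun x ↦ m + σ * x) = gaussianReal m (σ ^ 2) := by
  change ((gaussianReal 0 1).map ((m + ·) ∘ ((σ : ℝ) * ·))) = _
  rw [← Measure.map_map (by fun_prop) (by fun_prop), gaussianReal_map_const_mul,
    gaussianReal_map_const_add, mul_zero, zero_add, mul_one]
  congr 1

lemma lintegral_ofReal_sq_const_add_const_mul_gaussianReal (a b : ℝ) :
    ∫⁻ x, ENNReal.ofReal ((a + b * x) ^ 2) ∂gaussianReal 0 1 = ENNReal.ofReal (a ^ 2 + b ^ 2) := by
  have hid : Integrable (fun x ↦ x) (gaussianReal 0 1) :=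
    (memLp_id_gaussianReal 1).integrable le_rfl
  have hmem : MemLp (fun x ↦ a + b * x) 2 (gaussianReal 0 1) :=
    (memLp_const a).add ((memLp_id_gaussianReal 2).const_mul b)
  rw [← ofReal_integral_eq_lintegral_ofReal hmem.integrable_sq (ae_of_all _ fun _ ↦ sq_nonneg _),
    integral_sq_eq_sq_integral_add_variance hmem, variance_const_add (by fun_prop),
    variance_const_mul, variance_fun_id_gaussianReal, integral_add (integrable_const a)
    (hid.const_mul b), integral_const_mul, integral_id_gaussianReal]
  simp

end ProbabilityTheory

lemma exists_coupling_gaussianReal_lintegral_sq_eq (m₁ m₂ : ℝ) (σ₁ σ₂ : ℝ≥0) :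
    ∃ γ : Measure (ℝ × ℝ), γ.map Prod.fst = gaussianReal m₁ (σ₁ ^ 2) ∧
      γ.map Prod.snd = gaussianReal m₂ (σ₂ ^ 2) ∧
      ENNReal.ofReal ((m₁ - m₂) ^ 2 + ((σ₁ : ℝ) - σ₂) ^ 2) =
        ∫⁻ q, ENNReal.ofReal (|q.1 - q.2| ^ 2) ∂γ := by
  have hT : Measurable fun x : ℝ ↦ (m₁ + σ₁ * x, m₂ + σ₂ * x) := by fun_prop
  refine ⟨(gaussianReal 0 1).map fun x : ℝ ↦ (m₁ + σ₁ * x, m₂ + σ₂ * x), ?_, ?_, ?_⟩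
  · rw [Measure.map_map measurable_fst hT]
    exact gaussianReal_map_const_add_const_mul m₁ σ₁
  · rw [Measure.map_map measurable_snd hT]
    exact gaussianReal_map_const_add_const_mul m₂ σ₂
  have hcost (x : ℝ) :
      |(m₁ + σ₁ * x) - (m₂ + σ₂ * x)| ^ 2 = ((m₁ - m₂) + ((σ₁ : ℝ) - σ₂) * x) ^ 2 := by
    rw [sq_abs]; ring
  rw [lintegral_map (by fun_prop) hT]
  simp only [hcost]
  rw [lintegral_ofReal_sq_const_add_const_mul_gaussianReal]

lemma ofReal_le_lintegral_sq_of_map_eq_gaussianReal {m₁ m₂ : ℝ} {σ₁ σ₂ : ℝ≥0}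
    {γ : Measure (ℝ × ℝ)} (h₁ : γ.map Prod.fst = gaussianReal m₁ (σ₁ ^ 2))
    (h₂ : γ.map Prod.snd = gaussianReal m₂ (σ₂ ^ 2)) :
    ENNReal.ofReal ((m₁ - m₂) ^ 2 + ((σ₁ : ℝ) - σ₂) ^ 2) ≤
      ∫⁻ q, ENNReal.ofReal (|q.1 - q.2| ^ 2) ∂γ := by
  have hX : HasLaw Prod.fst (gaussianReal m₁ (σ₁ ^ 2)) γ := ⟨by fun_prop, h₁⟩
  have hY : HasLaw Prod.snd (gaussianReal m₂ (σ₂ ^ 2)) γ := ⟨by fun_prop, h₂⟩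
  have := hX.isProbabilityMeasure
  have hXmem := hX.hasGaussianLaw.memLp_two
  have hYmem := hY.hasGaussianLaw.memLp_two
  have hbound := sq_sub_integral_add_sq_sub_sqrt_variance_le hXmem hYmem
  rw [hX.integral_eq, hY.integral_eq, hX.variance_eq, hY.variance_eq, integral_id_gaussianReal,
    integral_id_gaussianReal, variance_id_gaussianReal, variance_id_gaussianReal] at hbound
  simp only [sq_abs]
  have hcost : Integrable (fun q : ℝ × ℝ ↦ (q.1 - q.2) ^ 2) γ := (hXmem.sub hYmem).integrable_sq
  rw [← ofReal_integral_eq_lintegral_ofReal hcost (ae_of_all _ fun _ ↦ sq_nonneg _)]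
  gcongr
  simpa using hbound

/-- For one-dimensional Gaussians `μ₁ = N(m₁, σ₁²)` and `μ₂ = N(m₂, σ₂²)`, the
squared 2-Wasserstein distance equals `(m₁ − m₂)² + (σ₁ − σ₂)²`. -/
theorem wasserstein_two_gaussian
    (m₁ m₂ : ℝ) (σ₁ σ₂ : ℝ≥0) :
    sInf { c : ℝ≥0∞ | ∃ γ : Measure (ℝ × ℝ),
        γ.map Prod.fst = gaussianReal m₁ (σ₁ ^ 2) ∧
        γ.map Prod.snd = gaussianReal m₂ (σ₂ ^ 2) ∧
        c = ∫⁻ q, ENNReal.ofReal (|q.1 - q.2| ^ 2) ∂γ } =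
      ENNReal.ofReal ((m₁ - m₂) ^ 2 + ((σ₁ : ℝ) - (σ₂ : ℝ)) ^ 2) := by
  refine IsLeast.csInf_eq ⟨exists_coupling_gaussianReal_lintegral_sq_eq m₁ m₂ σ₁ σ₂, ?_⟩
  rintro _ ⟨γ, h₁, h₂, rfl⟩
  exact ofReal_le_lintegral_sq_of_map_eq_gaussianReal h₁ h₂
end

section
/- For the raw CDF Π(X, t) = H(X − x(t)), where x(t) solves dx/dt = s(x(t), t) with smooth s and H is the Heaviside function, Π satisfies ∂Π/∂t + s(X, t) ∂Π/∂X = 0 in the sense of distributions. -/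
open MeasureTheory Set Function

private lemma hcs_of_subset {α : Type*} [TopologicalSpace α] [T2Space α]
    {f : α → ℝ} {K : Set α} (hK : IsCompact K) (h : ∀ u, f u ≠ 0 → u ∈ K) :
    HasCompactSupport f :=
  HasCompactSupport.intro hK fun u hu => by
    by_contra h0
    exact hu (h u h0)

private lemma shift_Ioi (u : ℝ → ℝ) (c : ℝ) :
    ∫ X in Ioi c, u X = ∫ X in Ioi (0:ℝ), u (X + c) := by
  have h : ∀ X : ℝ, (Ioi (0:ℝ)).indicator (fun Y => u (Y + c)) X
      = (Ioi c).indicator u (X + c) := by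
    intro X
    by_cases hX : X ∈ Ioi (0:ℝ)
    · rw [indicator_of_mem hX, indicator_of_mem (by simpa using hX)]
    · rw [indicator_of_notMem hX, indicator_of_notMem (by simpa using hX)]
  rw [← integral_indicator measurableSet_Ioi, ← integral_indicator measurableSet_Ioi]
  simp_rw [h]
  exact (integral_add_right_eq_self (fun X => (Ioi c).indicator u X) c).symm

private lemma slice_ftc (φ : ℝ × ℝ → ℝ) (hφ : ContDiff ℝ (⊤ : ℕ∞) φ) (hφc : HasCompactSupport φ)
    (t a : ℝ) :
    ∫ X in Ioi a, (fderiv ℝ φ (X, t)) (1, 0) = - φ (a, t) := by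
  have hd : ∀ X : ℝ, HasDerivAt (fun Y : ℝ => φ (Y, t)) ((fderiv ℝ φ (X, t)) (1, 0)) X :=
    fun X =>
      ((hφ.differentiable (by simp) (X, t)).hasFDerivAt).comp_hasDerivAt X
        ((hasDerivAt_id X).prodMk (hasDerivAt_const X t))
  have hcs : HasCompactSupport (fun Y : ℝ => φ (Y, t)) :=
    hcs_of_subset (IsCompact.image hφc continuous_fst)
      (fun X hX => ⟨(X, t), subset_tsupport _ hX, rfl⟩)
  have hct : ContDiff ℝ 1 (fun Y : ℝ => φ (Y, t)) :=
    (hφ.of_le (by simp)).comp (contDiff_id.prodMk contDiff_const)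
  have h0 := HasCompactSupport.integral_Ioi_deriv_eq hct hcs a
  calc ∫ X in Ioi a, (fderiv ℝ φ (X, t)) (1, 0)
      = ∫ X in Ioi a, deriv (fun Y : ℝ => φ (Y, t)) X :=
        integral_congr_ae (Filter.Eventually.of_forall fun X => ((hd X).deriv).symm)
    _ = - φ (a, t) := h0

private lemma integrable_fderiv_slice {φ : ℝ × ℝ → ℝ} (hφ : ContDiff ℝ (⊤ : ℕ∞) φ)
    (hφc : HasCompactSupport φ) (t c : ℝ) (v : ℝ × ℝ) :
    Integrable (fun X : ℝ => (fderiv ℝ φ (X + c, t)) v) := by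
  apply Continuous.integrable_of_hasCompactSupport
  · exact ((hφ.continuous_fderiv (by simp)).comp
      ((continuous_id.add continuous_const).prodMk continuous_const)).clm_apply
      continuous_const
  · apply hcs_of_subset (((IsCompact.image hφc continuous_fst).image
      (continuous_id.sub (continuous_const (y := c)))))
    intro X hX
    have h1 : (X + c, t) ∈ tsupport φ := by
      apply support_fderiv_subset ℝ
      intro h0
      exact hX (by simp [h0])
    exact ⟨X + c, ⟨(X + c, t), h1, rfl⟩, by simp⟩

/-- The raw CDF `Prw(X,t) = H(X − x(t))`, where `x` solves `dx/dt = s(x(t),t)`,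
satisfies the transport equation `∂Prw/∂t + s(X,t) ∂Prw/∂X = 0` in the sense of
distributions on `ℝ × (0,∞)`: tested against any smooth compactly supported
`ψ` supported in `t > 0`, one has `∫∫ Prw (∂ψ/∂t + ∂(sψ)/∂X) dX dt = 0`. -/
theorem heaviside_raw_cdf_transport_distributional
    (s : ℝ × ℝ → ℝ) (hs : ContDiff ℝ (⊤ : ℕ∞) s)
    (x : ℝ → ℝ) (hx : ∀ t, HasDerivAt x (s (x t, t)) t)
    (Prw : ℝ × ℝ → ℝ)
    (hPrw : ∀ p : ℝ × ℝ, Prw p = if x p.2 ≤ p.1 then (1 : ℝ) else 0) :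
    ∀ ψ : ℝ × ℝ → ℝ, ContDiff ℝ (⊤ : ℕ∞) ψ → HasCompactSupport ψ →
      (Function.support ψ ⊆ univ ×ˢ Ioi (0:ℝ)) →
      ∫ p : ℝ × ℝ,
        Prw p * (fderiv ℝ ψ p (0, 1) + fderiv ℝ (fun q => s q * ψ q) p (1, 0)) = 0 := by
  intro ψ hψ hψc _
  have hxc : Continuous x := continuous_iff_continuousAt.2 fun t => (hx t).continuousAt
  set g : ℝ × ℝ → ℝ := fun q => s q * ψ q with hgdef
  have hg : ContDiff ℝ (⊤ : ℕ∞) g := hs.mul hψ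
  have hgc : HasCompactSupport g :=
    hcs_of_subset hψc fun q hq =>
      subset_tsupport ψ (fun h0 => hq (by simp [hgdef, h0]))
  have hψd : Differentiable ℝ ψ := hψ.differentiable (by simp)
  have hψfc : Continuous (fderiv ℝ ψ) := hψ.continuous_fderiv (by simp)
  have hgfc : Continuous (fderiv ℝ g) := hg.continuous_fderiv (by simp)
  have hsc : Continuous s := hs.continuous
  have hψf0 : ∀ (p : ℝ × ℝ) (v : ℝ × ℝ), fderiv ℝ ψ p v ≠ 0 → p ∈ tsupport ψ := by
    intro p v hv
    apply support_fderiv_subset ℝ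
    intro h0
    exact hv (by simp [h0])
  have hgf0 : ∀ (p : ℝ × ℝ) (v : ℝ × ℝ), fderiv ℝ g p v ≠ 0 → p ∈ tsupport g := by
    intro p v hv
    apply support_fderiv_subset ℝ
    intro h0
    exact hv (by simp [h0])
  set h : ℝ × ℝ → ℝ := fun p => fderiv ℝ ψ p (0, 1) + fderiv ℝ g p (1, 0) with hhdef
  have hhc : Continuous h :=
    (hψfc.clm_apply continuous_const).add (hgfc.clm_apply continuous_const)
  have hhcs : HasCompactSupport h := by
    apply hcs_of_subset (IsCompact.union hψc hgc)
    intro p hp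
    have : fderiv ℝ ψ p (0, 1) ≠ 0 ∨ fderiv ℝ g p (1, 0) ≠ 0 := by
      by_contra hc
      push_neg at hc
      exact hp (by simp [hhdef, hc.1, hc.2])
    rcases this with h1 | h1
    · exact Or.inl (hψf0 p _ h1)
    · exact Or.inr (hgf0 p _ h1)
  have hPm : AEStronglyMeasurable Prw (volume : Measure (ℝ × ℝ)) := by
    have hPeq : Prw = fun p : ℝ × ℝ =>
        ({q : ℝ × ℝ | x q.2 ≤ q.1}).indicator (fun _ => (1:ℝ)) p := by
      funext p
      rw [hPrw p]
      by_cases hp : x p.2 ≤ p.1 <;> simp [indicator, hp]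
    rw [hPeq]
    exact (measurable_const.indicator
      ((isClosed_le (hxc.comp continuous_snd) continuous_fst).measurableSet)).aestronglyMeasurable
  have hPb : ∀ p, ‖Prw p‖ ≤ 1 := by
    intro p
    rw [hPrw p]
    by_cases hp : x p.2 ≤ p.1 <;> simp [hp]
  have hInt : Integrable (fun p => Prw p * h p) (volume : Measure (ℝ × ℝ)) :=
    (hhc.integrable_of_hasCompactSupport hhcs).bdd_mul hPm (c := 1) (Filter.Eventually.of_forall hPb)
  -- the shifted derivative in the characteristic direction
  set k : ℝ → ℝ → ℝ := fun X t => fderiv ℝ ψ (X + x t, t) (s (x t, t), 1) with hkdef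
  -- Fubini
  have fub1 : (∫ p : ℝ × ℝ, Prw p * h p) = ∫ t : ℝ, ∫ X : ℝ, Prw (X, t) * h (X, t) :=
    integral_prod_symm (fun p : ℝ × ℝ => Prw p * h p) hInt
  -- inner integral computation
  have inner : ∀ t : ℝ, (∫ X : ℝ, Prw (X, t) * h (X, t)) = ∫ X in Ioi (0:ℝ), k X t := by
    intro t
    have e1 : ∀ X : ℝ, Prw (X, t) * h (X, t)
        = (Ici (x t)).indicator (fun Y => h (Y, t)) X := by
      intro X
      rw [hPrw (X, t)]
      by_cases hX : x t ≤ X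
      · simp [indicator, hX]
      · simp [indicator, hX]
    have i1 : IntegrableOn (fun X : ℝ => fderiv ℝ ψ (X, t) (0, 1)) (Ioi (x t)) := by
      have := integrable_fderiv_slice hψ hψc t 0 (0, 1)
      simpa using this.integrableOn
    have i2 : IntegrableOn (fun X : ℝ => fderiv ℝ g (X, t) (1, 0)) (Ioi (x t)) := by
      have := integrable_fderiv_slice hg hgc t 0 (1, 0)
      simpa using this.integrableOn
    have split : (∫ X in Ioi (x t), h (X, t))
        = (∫ X in Ioi (x t), fderiv ℝ ψ (X, t) (0, 1))
          + ∫ X in Ioi (x t), fderiv ℝ g (X, t) (1, 0) := integral_add i1 i2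
    have e2 : (∫ X in Ioi (x t), fderiv ℝ g (X, t) (1, 0)) = - g (x t, t) :=
      slice_ftc g hg hgc t (x t)
    have e3 : (∫ X in Ioi (x t), fderiv ℝ ψ (X, t) (0, 1))
        = ∫ X in Ioi (0:ℝ), fderiv ℝ ψ (X + x t, t) (0, 1) :=
      shift_Ioi (fun X => fderiv ℝ ψ (X, t) (0, 1)) (x t)
    have e4 : (- g (x t, t))
        = ∫ X in Ioi (0:ℝ), s (x t, t) * fderiv ℝ ψ (X + x t, t) (1, 0) := by
      have e5 : (∫ X in Ioi (x t), fderiv ℝ ψ (X, t) (1, 0)) = - ψ (x t, t) :=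
        slice_ftc ψ hψ hψc t (x t)
      have e6 : (∫ X in Ioi (x t), fderiv ℝ ψ (X, t) (1, 0))
          = ∫ X in Ioi (0:ℝ), fderiv ℝ ψ (X + x t, t) (1, 0) :=
        shift_Ioi (fun X => fderiv ℝ ψ (X, t) (1, 0)) (x t)
      rw [integral_const_mul, ← e6, e5, hgdef]
      ring
    have i3 : IntegrableOn (fun X : ℝ => fderiv ℝ ψ (X + x t, t) (0, 1)) (Ioi (0:ℝ)) :=
      (integrable_fderiv_slice hψ hψc t (x t) (0, 1)).integrableOn
    have i4 : IntegrableOn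
        (fun X : ℝ => s (x t, t) * fderiv ℝ ψ (X + x t, t) (1, 0)) (Ioi (0:ℝ)) :=
      ((integrable_fderiv_slice hψ hψc t (x t) (1, 0)).const_mul _).integrableOn
    have merge : (∫ X in Ioi (0:ℝ), fderiv ℝ ψ (X + x t, t) (0, 1))
        + (∫ X in Ioi (0:ℝ), s (x t, t) * fderiv ℝ ψ (X + x t, t) (1, 0))
        = ∫ X in Ioi (0:ℝ), k X t := by
      rw [← integral_add i3 i4]
      apply integral_congr_ae
      apply Filter.Eventually.of_forall
      intro X
      have hv : (s (x t, t), (1:ℝ))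
          = s (x t, t) • ((1:ℝ), (0:ℝ)) + ((0:ℝ), (1:ℝ)) := by
        simp [Prod.ext_iff]
      rw [hkdef]
      simp only
      rw [hv, map_add, ContinuousLinearMap.map_smul, smul_eq_mul]
      ring
    calc (∫ X : ℝ, Prw (X, t) * h (X, t))
        = ∫ X : ℝ, (Ici (x t)).indicator (fun Y => h (Y, t)) X := by simp_rw [e1]
      _ = ∫ X in Ici (x t), h (X, t) := integral_indicator measurableSet_Ici
      _ = ∫ X in Ioi (x t), h (X, t) := integral_Ici_eq_integral_Ioi
      _ = (∫ X in Ioi (x t), fderiv ℝ ψ (X, t) (0, 1))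
            + ∫ X in Ioi (x t), fderiv ℝ g (X, t) (1, 0) := split
      _ = (∫ X in Ioi (0:ℝ), fderiv ℝ ψ (X + x t, t) (0, 1))
            + ∫ X in Ioi (0:ℝ), s (x t, t) * fderiv ℝ ψ (X + x t, t) (1, 0) := by
          rw [e2, e3, e4]
      _ = ∫ X in Ioi (0:ℝ), k X t := merge
  -- swap the order of integration
  have hK2c : Continuous (fun p : ℝ × ℝ => k p.2 p.1) := by
    apply Continuous.clm_apply
    · exact hψfc.comp ((continuous_snd.add (hxc.comp continuous_fst)).prodMk continuous_fst)
    · exact (hsc.comp ((hxc.comp continuous_fst).prodMk continuous_fst)).prodMk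
        continuous_const
  have hK2cs : HasCompactSupport (fun p : ℝ × ℝ => k p.2 p.1) := by
    set B : Set ℝ := Prod.snd '' tsupport ψ with hBdef
    set A : Set ℝ := Prod.fst '' tsupport ψ with hAdef
    have hB : IsCompact B := IsCompact.image hψc continuous_snd
    have hA : IsCompact A := IsCompact.image hψc continuous_fst
    set D : Set ℝ := (fun r : ℝ × ℝ => r.1 - r.2) '' (A ×ˢ (x '' B)) with hDdef
    have hD : IsCompact D :=
      (hA.prod (hB.image hxc)).image (continuous_fst.sub continuous_snd)
    apply hcs_of_subset (hB.prod hD)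
    intro p hp
    have hq : (p.2 + x p.1, p.1) ∈ tsupport ψ := hψf0 _ _ hp
    constructor
    · exact ⟨(p.2 + x p.1, p.1), hq, rfl⟩
    · refine ⟨(p.2 + x p.1, x p.1), ⟨⟨(p.2 + x p.1, p.1), hq, rfl⟩,
        ⟨p.1, ⟨(p.2 + x p.1, p.1), hq, rfl⟩, rfl⟩⟩, by simp⟩
  have hK2i : Integrable (fun p : ℝ × ℝ => k p.2 p.1)
      ((volume : Measure ℝ).prod ((volume : Measure ℝ).restrict (Ioi (0:ℝ)))) := by
    have hmeq : (volume : Measure ℝ).prod ((volume : Measure ℝ).restrict (Ioi (0:ℝ)))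
        = ((volume : Measure ℝ).prod (volume : Measure ℝ)).restrict (univ ×ˢ Ioi (0:ℝ)) := by
      rw [← Measure.prod_restrict, Measure.restrict_univ]
    rw [hmeq]
    exact (hK2c.integrable_of_hasCompactSupport hK2cs).restrict
  have fub2 : (∫ t : ℝ, ∫ X in Ioi (0:ℝ), k X t) = ∫ X in Ioi (0:ℝ), ∫ t : ℝ, k X t :=
    integral_integral_swap (f := fun t X => k X t) hK2i
  -- each characteristic integral vanishes
  have last : ∀ X : ℝ, (∫ t : ℝ, k X t) = 0 := by
    intro X
    have hder : ∀ t : ℝ, HasDerivAt (fun u : ℝ => ψ (X + x u, u)) (k X t) t := by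
      intro t
      have hc : HasDerivAt (fun u : ℝ => (X + x u, u)) (s (x t, t), 1) t :=
        ((hx t).const_add X).prodMk (hasDerivAt_id t)
      exact HasFDerivAt.comp_hasDerivAt (f := fun u : ℝ => (X + x u, u)) t ((hψd (X + x t, t)).hasFDerivAt) hc
    have hB : IsCompact (Prod.snd '' tsupport ψ) := IsCompact.image hψc continuous_snd
    have hint' : Integrable (fun t : ℝ => k X t) := by
      apply Continuous.integrable_of_hasCompactSupport
      · apply Continuous.clm_apply
        · exact hψfc.comp ((continuous_const.add hxc).prodMk continuous_id)
        · exact (hsc.comp (hxc.prodMk continuous_id)).prodMk continuous_const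
      · apply hcs_of_subset hB
        intro t ht
        exact ⟨(X + x t, t), hψf0 _ _ ht, rfl⟩
    have hint : Integrable (fun t : ℝ => ψ (X + x t, t)) := by
      apply Continuous.integrable_of_hasCompactSupport
      · exact hψ.continuous.comp ((continuous_const.add hxc).prodMk continuous_id)
      · apply hcs_of_subset hB
        intro t ht
        exact ⟨(X + x t, t), subset_tsupport _ ht, rfl⟩
    exact integral_eq_zero_of_hasDerivAt_of_integrable hder hint' hint
  calc ∫ p : ℝ × ℝ, Prw p * h p
      = ∫ t : ℝ, ∫ X : ℝ, Prw (X, t) * h (X, t) := fub1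
    _ = ∫ t : ℝ, ∫ X in Ioi (0:ℝ), k X t := by simp_rw [inner]
    _ = ∫ X in Ioi (0:ℝ), ∫ t : ℝ, k X t := fub2
    _ = 0 := by simp_rw [last]; simp
end
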